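/- arXiv:2211.16042 — 3 statements merged into one kernel-verified Lean document; each statement's English description precedes it below -/
import Mathlib

section
/- (Buchstaber's generating function for the face numbers of permutohedra, Theorem 2.4.) For all real numbers s and t, the formal power series F(X) = ∑_{n≥0} ( ∑_{k=0}^{n} Surj(n+1,k+1) · s^{n−k} t^{k} ) · X^{n+1}/(n+1)! satisfies, in the ring of formal power series over ℝ, the identity F(X) · ( s − t·(e^{sX} − 1) ) = e^{sX} − 1. -/
/-- Number of surjections from an `m`-element set onto a `j`-element set. -/
def Surj (m j : ℕ) : ℕ :=
  Fintype.card {f : Fin m → Fin j // Function.Surjective f}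

/-- The formal power series `e^{cX} = ∑ c^m X^m / m!` over `ℝ`. -/
noncomputable def expc (c : ℝ) : PowerSeries ℝ :=
  PowerSeries.rescale c (PowerSeries.exp ℝ)

lemma surj_zero_left (j : ℕ) : Surj 0 (j + 1) = 0 := by
  rw [Surj, Fintype.card_eq_zero_iff]
  exact ⟨fun ⟨f, hf⟩ => (hf 0).elim (fun x _ => x.elim0)⟩

lemma surj_zero_right (m : ℕ) : Surj (m + 1) 0 = 0 := by
  rw [Surj, Fintype.card_eq_zero_iff]
  exact ⟨fun ⟨f, _⟩ => (f 0).elim0⟩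

lemma surj_of_lt {m j : ℕ} (h : m < j) : Surj m j = 0 := by
  rw [Surj, Fintype.card_eq_zero_iff]
  refine ⟨fun ⟨f, hf⟩ => ?_⟩
  have := Fintype.card_le_of_surjective f hf
  simp at this; omega

open Finset in
lemma card_fiber (n k : ℕ) (T : Finset (Fin (n+1))) (hT : T ≠ Finset.univ) :
    Fintype.card {f : Fin (n+1) → Fin (k+1) //
        Function.Surjective f ∧ ∀ x, f x ≠ 0 ↔ x ∈ T}
      = Surj T.card k := by
  classical
  have e1 : {f : Fin (n+1) → Fin (k+1) // Function.Surjective f ∧ ∀ x, f x ≠ 0 ↔ x ∈ T}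
      ≃ {g : {x // x ∈ T} → Fin k // Function.Surjective g} := by
    refine ⟨fun f => ⟨fun x => (f.1 x.1).pred ((f.2.2 x.1).mpr x.2), ?_⟩,
      fun g => ⟨fun x => if h : x ∈ T then (g.1 ⟨x, h⟩).succ else 0, ?_, ?_⟩, ?_, ?_⟩
    · intro z
      obtain ⟨x, hx⟩ := f.2.1 z.succ
      have hx0 : f.1 x ≠ 0 := by rw [hx]; exact Fin.succ_ne_zero z
      refine ⟨⟨x, (f.2.2 x).mp hx0⟩, ?_⟩
      simp only [hx, Fin.pred_succ]
    · intro y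
      induction y using Fin.cases with
      | zero =>
        obtain ⟨x, hx⟩ : ∃ x, x ∉ T := by
          by_contra h; push_neg at h
          exact hT (Finset.eq_univ_iff_forall.mpr h)
        exact ⟨x, dif_neg hx⟩
      | succ z =>
        obtain ⟨x, hx⟩ := g.2 z
        refine ⟨x.1, ?_⟩
        simp only [dif_pos x.2]
        rw [show (⟨x.1, x.2⟩ : {x // x ∈ T}) = x from rfl, hx]
    · intro x
      by_cases h : x ∈ T <;> simp [h, Fin.succ_ne_zero]
    · rintro ⟨f, hf, hT'⟩
      ext x
      simp only
      by_cases h : x ∈ T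
      · rw [dif_pos h, Fin.succ_pred]
      · rw [dif_neg h]
        have : ¬ f x ≠ 0 := fun hc => h ((hT' x).mp hc)
        simp only [ne_eq, not_not] at this
        exact congrArg Fin.val this.symm
    · rintro ⟨g, hg⟩
      ext x
      simp only [dif_pos x.2, Fin.pred_succ]
  rw [Fintype.card_congr e1, Surj]
  have e2 : {g : {x // x ∈ T} → Fin k // Function.Surjective g}
      ≃ {g : Fin T.card → Fin k // Function.Surjective g} :=
    (Equiv.arrowCongr T.equivFin (Equiv.refl (Fin k))).subtypeEquiv (fun g =>
      (Function.Surjective.of_comp_iff g T.equivFin.symm.surjective).symm)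
  rw [Fintype.card_congr e2]

open Finset in
lemma surj_succ_succ (n k : ℕ) :
    Surj (n + 1) (k + 1) = ∑ j ∈ Finset.range (n + 1), (n + 1).choose j * Surj j k := by
  classical
  have hA : Surj (n + 1) (k + 1)
      = (Finset.univ.filter (fun f : Fin (n+1) → Fin (k+1) => Function.Surjective f)).card := by
    rw [Surj, Fintype.card_subtype]
  rw [hA]
  rw [Finset.card_eq_sum_card_fiberwise
    (f := fun f : Fin (n+1) → Fin (k+1) => Finset.univ.filter (fun x => f x ≠ 0))
    (t := (Finset.univ : Finset (Fin (n+1))).powerset)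
    (fun f _ => Finset.mem_powerset.mpr (Finset.subset_univ _))]
  have hfib : ∀ T ∈ (Finset.univ : Finset (Fin (n+1))).powerset,
      ((Finset.univ.filter (fun f : Fin (n+1) → Fin (k+1) => Function.Surjective f)).filter
        (fun f => Finset.univ.filter (fun x => f x ≠ 0) = T)).card
      = if T = Finset.univ then 0 else Surj T.card k := by
    intro T _
    by_cases hT : T = Finset.univ
    · rw [if_pos hT, Finset.card_eq_zero, Finset.filter_eq_empty_iff]
      intro f hf
      simp only [Finset.mem_filter, Finset.mem_univ, true_and] at hf
      intro hc
      obtain ⟨x, hx⟩ := hf 0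
      have : x ∈ T := hT ▸ Finset.mem_univ x
      rw [← hc] at this
      simp only [Finset.mem_filter, ne_eq] at this
      exact this.2 hx
    · rw [if_neg hT, Finset.filter_filter, ← card_fiber n k T hT, Fintype.card_subtype]
      congr 1
      apply Finset.filter_congr
      intro f _
      constructor
      · rintro ⟨h1, h2⟩
        refine ⟨h1, fun x => ?_⟩
        rw [← h2]; simp
      · rintro ⟨h1, h2⟩
        refine ⟨h1, ?_⟩
        ext x; simp [h2 x]
  rw [Finset.sum_congr rfl hfib, Finset.sum_powerset]
  have hcard : (Finset.univ : Finset (Fin (n+1))).card = n + 1 := by simp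
  rw [hcard, Finset.sum_range_succ]
  have hlast : ∑ T ∈ Finset.powersetCard (n+1) (Finset.univ : Finset (Fin (n+1))),
      (if T = Finset.univ then 0 else Surj T.card k) = 0 := by
    apply Finset.sum_eq_zero
    intro T hT
    rw [Finset.mem_powersetCard] at hT
    have : T = Finset.univ := Finset.eq_univ_of_card T (by rw [hT.2]; simp)
    simp [this]
  rw [hlast, add_zero]
  apply Finset.sum_congr rfl
  intro j hj
  rw [Finset.mem_range] at hj
  have : ∀ T ∈ Finset.powersetCard j (Finset.univ : Finset (Fin (n+1))),
      (if T = Finset.univ then 0 else Surj T.card k) = Surj j k := by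
    intro T hT
    rw [Finset.mem_powersetCard] at hT
    have hTne : T ≠ Finset.univ := by
      intro h
      rw [h, hcard] at hT
      omega
    rw [if_neg hTne, hT.2]
  rw [Finset.sum_congr rfl this, Finset.sum_const, Finset.card_powersetCard, hcard, smul_eq_mul]

lemma surj_zero_zero : Surj 0 0 = 1 := by decide

lemma surj_one (m : ℕ) : Surj (m + 1) 1 = 1 := by
  rw [surj_succ_succ]
  rw [Finset.sum_eq_single 0]
  · simp [surj_zero_zero]
  · intro j _ hj
    obtain ⟨j', rfl⟩ := Nat.exists_eq_succ_of_ne_zero hj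
    rw [surj_zero_right, mul_zero]
  · simp

lemma key (s t : ℝ) (n : ℕ) :
    s * (∑ k ∈ Finset.range (n + 1), (Surj (n + 1) (k + 1) : ℝ) * s ^ (n - k) * t ^ k)
      = s ^ (n + 1) + t * ∑ j ∈ Finset.range n, ((n + 1).choose (j + 1) : ℝ) * s ^ (n - j) *
          (∑ k ∈ Finset.range (j + 1), (Surj (j + 1) (k + 1) : ℝ) * s ^ (j - k) * t ^ k) := by
  have hR : t * ∑ j ∈ Finset.range n, ((n + 1).choose (j + 1) : ℝ) * s ^ (n - j) *
          (∑ k ∈ Finset.range (j + 1), (Surj (j + 1) (k + 1) : ℝ) * s ^ (j - k) * t ^ k)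
      = ∑ k ∈ Finset.range n, (∑ j ∈ Finset.range n,
          ((n + 1).choose (j + 1) : ℝ) * (Surj (j + 1) (k + 1) : ℝ)) * s ^ (n - k) * t ^ (k + 1) := by
    rw [Finset.mul_sum]
    have hj : ∀ j ∈ Finset.range n,
        t * (((n + 1).choose (j + 1) : ℝ) * s ^ (n - j) *
          ∑ k ∈ Finset.range (j + 1), (Surj (j + 1) (k + 1) : ℝ) * s ^ (j - k) * t ^ k)
        = ∑ k ∈ Finset.range n, ((n + 1).choose (j + 1) : ℝ) * (Surj (j + 1) (k + 1) : ℝ)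
            * s ^ (n - k) * t ^ (k + 1) := by
      intro j hjn
      rw [Finset.mem_range] at hjn
      rw [← Finset.sum_subset (Finset.range_subset_range.mpr (by omega : j + 1 ≤ n))
        (by
          intro k _ hk
          rw [Finset.mem_range, not_lt] at hk
          rw [surj_of_lt (by omega : j + 1 < k + 1)]
          push_cast
          ring)]
      rw [Finset.mul_sum, Finset.mul_sum]
      apply Finset.sum_congr rfl
      intro k hk
      rw [Finset.mem_range] at hk
      have hs : s ^ (n - j) * s ^ (j - k) = s ^ (n - k) := by
        rw [← pow_add]
        congr 1
        omega
      calc t * (((n + 1).choose (j + 1) : ℝ) * s ^ (n - j) *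
              ((Surj (j + 1) (k + 1) : ℝ) * s ^ (j - k) * t ^ k))
          = ((n + 1).choose (j + 1) : ℝ) * (Surj (j + 1) (k + 1) : ℝ)
              * (s ^ (n - j) * s ^ (j - k)) * t ^ (k + 1) := by ring
        _ = _ := by rw [hs]
    rw [Finset.sum_congr rfl hj, Finset.sum_comm]
    apply Finset.sum_congr rfl
    intro k _
    rw [Finset.sum_mul, Finset.sum_mul]
  rw [hR, Finset.mul_sum, Finset.sum_range_succ']
  have h0 : s * ((Surj (n + 1) (0 + 1) : ℝ) * s ^ (n - 0) * t ^ 0) = s ^ (n + 1) := by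
    rw [surj_one]
    simp [pow_succ]
    ring
  rw [h0, add_comm]
  congr 1
  apply Finset.sum_congr rfl
  intro k hk
  rw [Finset.mem_range] at hk
  have hrec : (Surj (n + 1) (k + 1 + 1) : ℝ)
      = ∑ j ∈ Finset.range n, ((n + 1).choose (j + 1) : ℝ) * (Surj (j + 1) (k + 1) : ℝ) := by
    rw [surj_succ_succ, Nat.cast_sum, Finset.sum_range_succ']
    simp [surj_zero_left]
  rw [hrec]
  have hs : s * s ^ (n - (k + 1)) = s ^ (n - k) := by
    rw [← pow_succ']
    congr 1
    omega
  calc s * ((∑ j ∈ Finset.range n, ((n + 1).choose (j + 1) : ℝ) * (Surj (j + 1) (k + 1) : ℝ))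
          * s ^ (n - (k + 1)) * t ^ (k + 1))
      = (∑ j ∈ Finset.range n, ((n + 1).choose (j + 1) : ℝ) * (Surj (j + 1) (k + 1) : ℝ))
          * (s * s ^ (n - (k + 1))) * t ^ (k + 1) := by ring
    _ = _ := by rw [hs]


/-- Buchstaber's generating function of the face numbers of permutohedra:
`F(X) = ∑_{n≥0} f_{Π^n}(s,t) X^{n+1}/(n+1)!` satisfies
`F(X)·(s - t·(e^{sX} - 1)) = e^{sX} - 1`, where the number of codimension-`k` faces of
the permutohedron `Π^n` is `Surj(n+1,k+1)`. -/
theorem permutohedron_face_egf (s t : ℝ) :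
    (PowerSeries.mk (fun m => match m with
      | 0 => 0
      | n + 1 =>
          (∑ k ∈ Finset.range (n + 1),
            (Surj (n + 1) (k + 1) : ℝ) * s ^ (n - k) * t ^ k) / (n + 1).factorial)) *
      (PowerSeries.C s - PowerSeries.C t * (expc s - 1)) = expc s - 1 := by
  set F : PowerSeries ℝ := PowerSeries.mk (fun m => match m with
      | 0 => 0
      | n + 1 =>
          (∑ k ∈ Finset.range (n + 1),
            (Surj (n + 1) (k + 1) : ℝ) * s ^ (n - k) * t ^ k) / (n + 1).factorial) with hF
  have hF0 : PowerSeries.coeff 0 F = 0 := by rw [hF, PowerSeries.coeff_mk]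
  have hFS : ∀ n : ℕ, PowerSeries.coeff (n + 1) F
      = (∑ k ∈ Finset.range (n + 1),
          (Surj (n + 1) (k + 1) : ℝ) * s ^ (n - k) * t ^ k) / (n + 1).factorial := by
    intro n; rw [hF, PowerSeries.coeff_mk]
  have hG : ∀ q : ℕ, PowerSeries.coeff q (expc s - 1)
      = if q = 0 then 0 else s ^ q / q.factorial := by
    intro q
    rw [map_sub, expc, PowerSeries.coeff_rescale, PowerSeries.coeff_exp, PowerSeries.coeff_one]
    rcases q with _ | q
    · simp
    · simp only [Nat.succ_ne_zero, if_false, sub_zero]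
      rw [map_div₀, map_one, map_natCast]
      ring
  suffices h : F * PowerSeries.C s = (expc s - 1) * (1 + PowerSeries.C t * F) by
    linear_combination h
  ext m
  rw [PowerSeries.coeff_mul_C, PowerSeries.coeff_mul,
    Finset.Nat.sum_antidiagonal_eq_sum_range_succ_mk]
  have hsummand : ∀ p, PowerSeries.coeff p (expc s - 1) *
        PowerSeries.coeff (m - p) (1 + PowerSeries.C t * F)
      = (if p = 0 then 0 else s ^ p / p.factorial) *
        ((if m - p = 0 then 1 else 0) + t * PowerSeries.coeff (m - p) F) := by
    intro p
    rw [hG, map_add, PowerSeries.coeff_one, PowerSeries.coeff_C_mul]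
  rw [Finset.sum_congr rfl (fun p _ => hsummand p)]
  rcases m with _ | n
  · simp [hF0]
  · conv_rhs => rw [Finset.sum_range_succ, Finset.sum_range_succ']
    rw [hFS]
    have hlastterm : (if n + 1 = 0 then (0:ℝ) else s ^ (n+1) / (n+1).factorial) *
        ((if n + 1 - (n + 1) = 0 then 1 else 0) + t * PowerSeries.coeff (n + 1 - (n + 1)) F)
        = s ^ (n+1) / (n+1).factorial := by
      simp [hF0]
    have hzeroterm : (if (0:ℕ) = 0 then (0:ℝ) else s ^ 0 / Nat.factorial 0) *
        ((if n + 1 - 0 = 0 then 1 else 0) + t * PowerSeries.coeff (n + 1 - 0) F) = 0 := by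
      simp
    rw [hlastterm, hzeroterm, add_zero]
    -- now: a_n/(n+1)! * s = ∑_{i∈range n} (s^{i+1}/(i+1)!) * ((if n+1-(i+1)=0 then 1 else 0)
    --        + t * coeff (n+1-(i+1)) F) + s^{n+1}/(n+1)!
    have hterm : ∀ i ∈ Finset.range n,
        (if (i + 1) = 0 then 0 else s ^ (i+1) / (i+1).factorial) *
          ((if n + 1 - (i + 1) = 0 then 1 else 0) + t * PowerSeries.coeff (n + 1 - (i + 1)) F)
        = t * (((n + 1).choose (n - i) : ℝ) * s ^ (i + 1) *
            (∑ k ∈ Finset.range (n - 1 - i + 1),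
              (Surj (n - 1 - i + 1) (k + 1) : ℝ) * s ^ (n - 1 - i - k) * t ^ k))
            / (n + 1).factorial := by
      intro i hi
      rw [Finset.mem_range] at hi
      have h1 : n + 1 - (i + 1) = (n - 1 - i) + 1 := by omega
      rw [h1, hFS, if_neg (Nat.succ_ne_zero _), if_neg (Nat.succ_ne_zero _), zero_add]
      have hc : ((n + 1).choose (n - i) : ℝ)
          = (n + 1).factorial / ((n - i).factorial * ((i + 1)).factorial) := by
        rw [Nat.cast_choose ℝ (by omega : n - i ≤ n + 1),
          (by omega : n + 1 - (n - i) = i + 1)]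
      rw [hc]
      have h2 : ((n - 1 - i) + 1).factorial = (n - i).factorial := by congr 1; omega
      rw [h2]
      have f1 : ((n + 1).factorial : ℝ) ≠ 0 := Nat.cast_ne_zero.mpr (Nat.factorial_ne_zero _)
      have f2 : ((n - i).factorial : ℝ) ≠ 0 := Nat.cast_ne_zero.mpr (Nat.factorial_ne_zero _)
      have f3 : (((i + 1)).factorial : ℝ) ≠ 0 := Nat.cast_ne_zero.mpr (Nat.factorial_ne_zero _)
      field_simp
    rw [Finset.sum_congr rfl hterm]
    have hmain := key s t n
    have hrefl := Finset.sum_range_reflect (fun j => ((n + 1).choose (j + 1) : ℝ) * s ^ (n - j) *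
          (∑ k ∈ Finset.range (j + 1), (Surj (j + 1) (k + 1) : ℝ) * s ^ (j - k) * t ^ k)) n
    have hterm2 : ∀ i ∈ Finset.range n,
        ((n + 1).choose (n - 1 - i + 1) : ℝ) * s ^ (n - (n - 1 - i)) *
          (∑ k ∈ Finset.range ((n - 1 - i) + 1),
            (Surj ((n - 1 - i) + 1) (k + 1) : ℝ) * s ^ ((n - 1 - i) - k) * t ^ k)
        = ((n + 1).choose (n - i) : ℝ) * s ^ (i + 1) *
          (∑ k ∈ Finset.range ((n - 1 - i) + 1),
            (Surj ((n - 1 - i) + 1) (k + 1) : ℝ) * s ^ ((n - 1 - i) - k) * t ^ k) := by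
      intro i hi
      rw [Finset.mem_range] at hi
      rw [(by omega : n - 1 - i + 1 = n - i), (by omega : n - (n - 1 - i) = i + 1)]
    rw [Finset.sum_congr rfl hterm2] at hrefl
    have f1 : ((n + 1).factorial : ℝ) ≠ 0 := Nat.cast_ne_zero.mpr (Nat.factorial_ne_zero _)
    rw [div_mul_eq_mul_div, mul_comm, hmain, ← hrefl, Finset.mul_sum, add_div,
      Finset.sum_div, add_comm]
end

section
/- (Binomial identity underlying the computation of the middle Hodge numbers of the theta divisor, formula for S_{n,p}.) For all natural numbers n and 0 ≤ p ≤ n, the following identity holds in ℚ: (−1)^{n−p} · [ ∑_{q=0}^{n−p−1} (−1)^q · C(n+1,p)·C(n+1,q) + ∑_{q=n−p+1}^{n} (−1)^q · C(n+1,p+1)·C(n+1,q+1) ] = (−1)^{p} · C(n+2,p+1) · [ (−1)^p · ((2p−n)/(n+2)) · C(n+1,p) + ∑_{k=0}^{p−1} (−1)^k · C(n+1,k) ], where C(a,b) denotes the binomial coefficient and 2p−n is computed in ℤ (it may be negative). -/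
/-- The binomial identity for `S_{n,p}`, the alternating sum of the known Hodge numbers of
the theta divisor `Θ^n` (those with `p+q ≠ n`): for `p ≤ n`,
`(-1)^{n-p}·(∑_{q=0}^{n-p-1} (-1)^q C(n+1,p)C(n+1,q) + ∑_{q=n-p+1}^{n} (-1)^q C(n+1,p+1)C(n+1,q+1))`
`= (-1)^p·C(n+2,p+1)·((-1)^p·((2p-n)/(n+2))·C(n+1,p) + ∑_{k=0}^{p-1} (-1)^k C(n+1,k))`. -/
theorem hodge_Snp_identity (n p : ℕ) (hp : p ≤ n) :
    (-1 : ℚ) ^ (n - p) *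
        ((∑ q ∈ Finset.range (n - p),
            (-1 : ℚ) ^ q * ((n + 1).choose p : ℚ) * ((n + 1).choose q : ℚ)) +
          ∑ q ∈ Finset.Icc (n - p + 1) n,
            (-1 : ℚ) ^ q * ((n + 1).choose (p + 1) : ℚ) * ((n + 1).choose (q + 1) : ℚ)) =
      (-1 : ℚ) ^ p * ((n + 2).choose (p + 1) : ℚ) *
        ((-1 : ℚ) ^ p * ((2 * (p : ℚ) - (n : ℚ)) / ((n : ℚ) + 2)) * ((n + 1).choose p : ℚ) +
          ∑ k ∈ Finset.range p, (-1 : ℚ) ^ k * ((n + 1).choose k : ℚ)) := by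
  have hG : ∀ m, ∑ q ∈ Finset.range m, (-1:ℚ)^q * ((n+1).choose q : ℚ)
      = (-1)^m * ((n.choose m : ℚ) - ((n+1).choose m : ℚ)) := by
    intro m
    induction m with
    | zero => simp
    | succ m ih =>
      rw [Finset.sum_range_succ, ih, Nat.choose_succ_succ n m]
      push_cast
      ring
  have hF : ∀ m, ∑ q ∈ Finset.range m, (-1:ℚ)^q * ((n+1).choose (q+1) : ℚ)
      = 1 - (-1)^m * (n.choose m : ℚ) := by
    intro m
    induction m with
    | zero => simp
    | succ m ih =>
      rw [Finset.sum_range_succ, ih, Nat.choose_succ_succ n m]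
      push_cast
      ring
  have e1 : ∑ q ∈ Finset.range (n-p), (-1:ℚ)^q * ((n+1).choose p : ℚ) * ((n+1).choose q : ℚ)
      = ((n+1).choose p : ℚ) * ((-1)^(n-p) * ((n.choose (n-p) : ℚ) - ((n+1).choose (n-p) : ℚ))) := by
    rw [← hG (n-p), Finset.mul_sum]
    exact Finset.sum_congr rfl fun q _ => by ring
  have e2 : ∑ q ∈ Finset.Icc (n-p+1) n, (-1:ℚ)^q * ((n+1).choose (p+1) : ℚ) * ((n+1).choose (q+1) : ℚ)
      = ((n+1).choose (p+1) : ℚ) *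
        ((1 - (-1:ℚ)^(n+1) * (n.choose (n+1) : ℚ)) - (1 - (-1:ℚ)^(n-p+1) * (n.choose (n-p+1) : ℚ))) := by
    have hconst : ∀ m, ∑ q ∈ Finset.range m, (-1:ℚ)^q * ((n+1).choose (p+1) : ℚ) * ((n+1).choose (q+1) : ℚ)
        = ((n+1).choose (p+1) : ℚ) * (1 - (-1:ℚ)^m * (n.choose m : ℚ)) := by
      intro m
      rw [← hF m, Finset.mul_sum]
      exact Finset.sum_congr rfl fun q _ => by ring
    rw [← Finset.Ico_add_one_right_eq_Icc, Finset.sum_Ico_eq_sub _ (by omega : n - p + 1 ≤ n + 1),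
      hconst, hconst]
    ring
  have e3 := hG p
  rw [e1, e2, e3]
  have s1 : n.choose (n-p) = n.choose p := Nat.choose_symm hp
  have s2 : (n+1).choose (n-p) = (n+1).choose (p+1) := by
    rw [show n - p = (n+1) - (p+1) by omega]
    exact Nat.choose_symm (by omega)
  have s3 : n.choose (n+1) = 0 := Nat.choose_eq_zero_of_lt (by omega)
  rw [s1, s2, s3]
  -- abbreviations
  set a : ℚ := (n.choose p : ℚ) with ha
  set b : ℚ := ((n+1).choose p : ℚ) with hb
  set c : ℚ := ((n+1).choose (p+1) : ℚ) with hc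
  set d : ℚ := ((n+2).choose (p+1) : ℚ) with hd
  set e : ℚ := (n.choose (n-p+1) : ℚ) with he
  have h3c : d = b + c := by
    rw [hb, hc, hd, show n + 2 = (n+1) + 1 from rfl, Nat.choose_succ_succ (n+1) p]
    push_cast; ring
  have s4c : b = a + e := by
    have h1 : (n+1).choose (n-p+1) = n.choose (n-p) + n.choose (n-p+1) :=
      Nat.choose_succ_succ n (n-p)
    have h2 : (n+1).choose (n-p+1) = (n+1).choose p := by
      rw [show n - p + 1 = (n+1) - p by omega]
      exact Nat.choose_symm (by omega)
    rw [hb, ha, he, ← h2, h1, s1]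
    push_cast; ring
  have h4c : c * ((p:ℚ)+1) = b * ((n:ℚ)+1-(p:ℚ)) := by
    have h := Nat.choose_succ_right_eq (n+1) p
    have : ((n+1).choose (p+1) * (p+1) : ℚ) = ((n+1).choose p * (n+1-p) : ℕ) := by
      exact_mod_cast congrArg (Nat.cast : ℕ → ℚ) h
    rw [hc, hb]
    push_cast [Nat.cast_sub (show p ≤ n+1 by omega)] at this ⊢
    linarith [this]
  have hn2 : ((n:ℚ)+2) ≠ 0 := by positivity
  have key : b * (a - c) - c * e = d * ((2*(p:ℚ) - (n:ℚ))/((n:ℚ)+2) * b + (a - b)) := by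
    rw [div_mul_eq_mul_div, ← sub_eq_zero]
    field_simp
    ring_nf
    linear_combination (-(2*(p:ℚ)-n)*b - ((n:ℚ)+2)*(a-b)) * h3c + (((n:ℚ)+2)*c) * s4c + (-2*b) * h4c
  have ht : (-1:ℚ)^(n-p) * (-1:ℚ)^(n-p) = 1 := by
    rw [← pow_add]
    exact Even.neg_one_pow ⟨n-p, rfl⟩
  have hu : (-1:ℚ)^p * (-1:ℚ)^p = 1 := by
    rw [← pow_add]
    exact Even.neg_one_pow ⟨p, rfl⟩
  linear_combination (b * (a - c) - c * e) * ht
    - (d * ((2*(p:ℚ) - (n:ℚ))/((n:ℚ)+2) * b + (a - b))) * hu + key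
end

section
/- (The function β(x) = (e^{sx} − e^{tx})/(s·e^{tx} − t·e^{sx}) is the exponential of the two-parameter formal group.) Let s, t, x, y be real numbers, and set D(u) = s·e^{tu} − t·e^{su} and β(u) = (e^{su} − e^{tu})/D(u). If D(x) ≠ 0, D(y) ≠ 0, D(x+y) ≠ 0 and 1 − s·t·β(x)·β(y) ≠ 0, then β(x+y) = ( β(x) + β(y) + (s+t)·β(x)·β(y) ) / ( 1 − s·t·β(x)·β(y) ). -/
set_option maxHeartbeats 1000000 in
/-- The function `β(u) = (e^{su} - e^{tu})/(s·e^{tu} - t·e^{su})` is the exponential of the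
two-parameter formal group `F(u,v) = (u + v + (s+t)uv)/(1 - st·uv)`: wherever the
denominators do not vanish, `β(x+y) = F(β(x), β(y))`. -/
theorem beta_is_formal_group_exponential (s t x y : ℝ) (D β : ℝ → ℝ)
    (hD : ∀ u, D u = s * Real.exp (t * u) - t * Real.exp (s * u))
    (hβ : ∀ u, β u = (Real.exp (s * u) - Real.exp (t * u)) / D u)
    (hx : D x ≠ 0) (hy : D y ≠ 0) (hxy : D (x + y) ≠ 0)
    (hden : 1 - s * t * β x * β y ≠ 0) :
    β (x + y) =
      (β x + β y + (s + t) * β x * β y) / (1 - s * t * β x * β y) := by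
  have hexs : Real.exp (s * (x + y)) = Real.exp (s * x) * Real.exp (s * y) := by
    rw [mul_add, Real.exp_add]
  have hext : Real.exp (t * (x + y)) = Real.exp (t * x) * Real.exp (t * y) := by
    rw [mul_add, Real.exp_add]
  set a := Real.exp (s * x) with ha
  set b := Real.exp (t * x) with hb
  set c := Real.exp (s * y) with hc
  set d := Real.exp (t * y) with hd
  have hx' : s * b - t * a ≠ 0 := by rw [hD x] at hx; exact hx
  have hy' : s * d - t * c ≠ 0 := by rw [hD y] at hy; exact hy
  have hxy' : s * (b * d) - t * (a * c) ≠ 0 := by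
    rw [hD (x + y), hexs, hext] at hxy; exact hxy
  have hβx : β x = (a - b) / (s * b - t * a) := by rw [hβ x, hD x]
  have hβy : β y = (c - d) / (s * d - t * c) := by rw [hβ y, hD y]
  have hβxy : β (x + y) = (a * c - b * d) / (s * (b * d) - t * (a * c)) := by
    rw [hβ (x + y), hD (x + y), hexs, hext]
  rw [hβx, hβy] at hden ⊢
  rw [hβxy, div_eq_div_iff hxy' hden]
  have h1 : b * s - a * t ≠ 0 := by rw [mul_comm b, mul_comm a]; exact hx'
  have h2 : d * s - c * t ≠ 0 := by rw [mul_comm d, mul_comm c]; exact hy'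
  field_simp
  ring
end
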